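/- Let A and B be real symmetric n×n matrices and set D = I_n − i(A + B). Then D is invertible, and for every x ∈ ℝⁿ and every t ∈ ℝⁿ the convolution of the chirp s ↦ exp(iπ s·Bs) with the chirped shifted Gaussian u ↦ exp(iπ u·Au) exp(−π ‖u − x‖²) satisfies: ∫_{ℝⁿ} exp(iπ (t−u)·B(t−u)) · exp(iπ u·Au) · exp(−π ‖u − x‖²) du = κ_D · exp(−π t·(I − iA)(I − D⁻¹(I − iA))t) · exp(−2πi t·(B D⁻¹)x) · exp(−π x·(I − D⁻¹)x), where κ_D = ∫_{ℝⁿ} exp(−π s·Ds) ds is a nonzero complex constant independent of x and t. -/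

import Mathlib

open Matrix MeasureTheory

noncomputable section GaussHelpers
open Complex


variable {n : ℕ}

def cv {n : ℕ} (x : Fin n → ℝ) : Fin n → ℂ := fun i => (x i : ℂ)

lemma cv_sub (x y : Fin n → ℝ) : cv (x - y) = cv x - cv y := by funext i; simp [cv]

lemma map_mulVec_cv (M : Matrix (Fin n) (Fin n) ℝ) (x : Fin n → ℝ) :
    (M.map Complex.ofReal).mulVec (cv x) = cv (M.mulVec x) := by
  funext i; simp [Matrix.mulVec, dotProduct, cv]

lemma cv_dot (x y : Fin n → ℝ) : ((x ⬝ᵥ y : ℝ) : ℂ) = cv x ⬝ᵥ cv y := by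
  simp [dotProduct, cv]

lemma cv_dot_mulVec (M : Matrix (Fin n) (Fin n) ℝ) (x y : Fin n → ℝ) :
    ((x ⬝ᵥ M.mulVec y : ℝ) : ℂ) = cv x ⬝ᵥ (M.map Complex.ofReal).mulVec (cv y) := by
  rw [map_mulVec_cv, cv_dot]

lemma dot_symm_swap (M : Matrix (Fin n) (Fin n) ℂ) (hM : Mᵀ = M) (a b : Fin n → ℂ) :
    a ⬝ᵥ M.mulVec b = b ⬝ᵥ M.mulVec a := by
  rw [Matrix.dotProduct_mulVec, ← Matrix.mulVec_transpose, hM, dotProduct_comm]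

lemma dot_mulVec_left (M : Matrix (Fin n) (Fin n) ℂ) (hM : Mᵀ = M) (a b : Fin n → ℂ)
    (N : Matrix (Fin n) (Fin n) ℂ) :
    a ⬝ᵥ (M * N).mulVec b = M.mulVec a ⬝ᵥ N.mulVec b := by
  rw [← Matrix.mulVec_mulVec, Matrix.dotProduct_mulVec, ← Matrix.mulVec_transpose, hM]

lemma int_one_dim (d c' : ℂ) (hd : 0 < d.re) :
    ∫ s : ℝ, Complex.exp (-(Real.pi : ℂ) * (d * ((s : ℂ) - c') ^ 2))
      = (1 / d) ^ (1 / 2 : ℂ) := by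
  have hπ : (Real.pi : ℂ) ≠ 0 := by exact_mod_cast Real.pi_ne_zero
  have hd0 : d ≠ 0 := fun h => by simp [h] at hd
  have hb : (-(Real.pi : ℂ) * d).re < 0 := by
    have : (-(Real.pi : ℂ) * d).re = -Real.pi * d.re := by simp [Complex.mul_re]
    rw [this]; have := Real.pi_pos; nlinarith
  have h1 : ∀ s : ℝ, -(Real.pi : ℂ) * (d * ((s : ℂ) - c') ^ 2)
      = (-(Real.pi : ℂ) * d) * (s : ℂ) ^ 2 + (2 * (Real.pi : ℂ) * d * c') * (s : ℂ)
        + (-(Real.pi : ℂ) * d * c' ^ 2) := by intro s; ring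
  simp_rw [h1]
  rw [integral_cexp_quadratic hb]
  have h2 : (-(Real.pi : ℂ) * d * c' ^ 2)
      - (2 * (Real.pi : ℂ) * d * c') ^ 2 / (4 * (-(Real.pi : ℂ) * d)) = 0 := by
    field_simp; ring
  rw [h2, Complex.exp_zero, mul_one]
  congr 1
  rw [neg_mul, neg_neg]
  field_simp

/-- Core lemma: value of the shifted complex Gaussian integral, independent of the
(complex) shift. -/
lemma core (S : Matrix (Fin n) (Fin n) ℝ) (hS : S.IsSymm) :
    ∃ P : ℂ, P ≠ 0 ∧ IsUnit (1 - Complex.I • S.map Complex.ofReal) ∧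
      ∀ c : Fin n → ℂ,
        (∫ u : Fin n → ℝ, Complex.exp (-(Real.pi : ℂ) *
          ((cv u - c) ⬝ᵥ (1 - Complex.I • S.map Complex.ofReal).mulVec (cv u - c)))) = P := by
  have hH : S.IsHermitian := by
    rw [Matrix.IsHermitian, conjTranspose_eq_transpose_of_trivial]; exact hS
  set U : Matrix (Fin n) (Fin n) ℝ := (hH.eigenvectorUnitary : Matrix (Fin n) (Fin n) ℝ) with hU
  set μ : Fin n → ℝ := RCLike.ofReal ∘ hH.eigenvalues with hμ
  have hspec : S = U * diagonal μ * Uᵀ := by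
    have := hH.spectral_theorem
    rwa [Unitary.conjStarAlgAut_apply, star_eq_conjTranspose, conjTranspose_eq_transpose_of_trivial] at this
  have hU1 : Uᵀ * U = 1 := by
    have := (Matrix.mem_unitaryGroup_iff').mp (hH.eigenvectorUnitary).2
    rwa [star_eq_conjTranspose, conjTranspose_eq_transpose_of_trivial] at this
  have hU2 : U * Uᵀ = 1 := by
    have := (Matrix.mem_unitaryGroup_iff).mp (hH.eigenvectorUnitary).2
    rwa [star_eq_conjTranspose, conjTranspose_eq_transpose_of_trivial] at this
  set V : Matrix (Fin n) (Fin n) ℂ := U.map Complex.ofReal with hV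
  set d : Fin n → ℂ := fun j => 1 - Complex.I * (μ j) with hd
  have hmapmul : ∀ M N : Matrix (Fin n) (Fin n) ℝ,
      (M * N).map Complex.ofReal = M.map Complex.ofReal * N.map Complex.ofReal := by
    intro M N
    exact Matrix.map_mul (f := Complex.ofRealHom)
  have hmapone : (1 : Matrix (Fin n) (Fin n) ℝ).map Complex.ofReal = 1 :=
    Matrix.map_one _ (by simp) (by simp)
  have hV1 : Vᵀ * V = 1 := by
    rw [hV, ← Matrix.transpose_map, ← hmapmul, hU1, hmapone]
  have hV2 : V * Vᵀ = 1 := by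
    rw [hV, ← Matrix.transpose_map, ← hmapmul, hU2, hmapone]
  have hdiag : (1 : Matrix (Fin n) (Fin n) ℂ) - Complex.I • diagonal (fun j => ((μ j : ℝ) : ℂ))
      = diagonal d := by
    rw [← diagonal_one, ← Matrix.diagonal_smul, ← Matrix.diagonal_sub]
    rfl
  have hfact : (1 : Matrix (Fin n) (Fin n) ℂ) - Complex.I • S.map Complex.ofReal
      = V * diagonal d * Vᵀ := by
    have hsm : S.map Complex.ofReal = V * diagonal (fun j => ((μ j : ℝ) : ℂ)) * Vᵀ := by
      rw [hspec, hmapmul, hmapmul, ← Matrix.transpose_map]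
      congr 2
      rw [Matrix.diagonal_map (by simp)]
    rw [hsm, ← hdiag]
    rw [Matrix.mul_sub, Matrix.sub_mul, Matrix.mul_one, hV2, Matrix.mul_smul, Matrix.smul_mul]
  have hdre : ∀ j, (d j).re = 1 := by
    intro j; simp [hd]
  have hd0 : ∀ j, d j ≠ 0 := by
    intro j h
    have := hdre j; rw [h] at this; simp at this
  have hdpos : ∀ j, 0 < (d j).re := by intro j; rw [hdre]; norm_num
  -- the quadratic form diagonalizes
  have hform : ∀ w : Fin n → ℂ,
      w ⬝ᵥ (V * diagonal d * Vᵀ).mulVec w = ∑ j, d j * ((Vᵀ.mulVec w) j) ^ 2 := by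
    intro w
    rw [Matrix.mul_assoc, ← Matrix.mulVec_mulVec, Matrix.dotProduct_mulVec,
      ← Matrix.mulVec_transpose, ← Matrix.mulVec_mulVec]
    simp only [dotProduct, Matrix.mulVec_diagonal]
    exact Finset.sum_congr rfl fun j _ => by ring
  refine ⟨∏ j, (1 / d j) ^ (1 / 2 : ℂ), ?_, ?_, ?_⟩
  · refine Finset.prod_ne_zero_iff.mpr fun j _ => ?_
    simp only [ne_eq, Complex.cpow_eq_zero_iff, not_and_or, not_not]
    left
    simp [hd0 j]
  · rw [Matrix.isUnit_iff_isUnit_det, hfact]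
    rw [Matrix.det_mul, Matrix.det_mul, Matrix.det_transpose, Matrix.det_diagonal]
    have hdetV : V.det * V.det = 1 := by
      have := congrArg Matrix.det hV1
      rwa [Matrix.det_mul, Matrix.det_transpose, Matrix.det_one] at this
    rw [isUnit_iff_ne_zero]
    intro h
    rcases mul_eq_zero.mp h with h | h
    · rcases mul_eq_zero.mp h with h | h
      · rw [h, zero_mul] at hdetV; simp at hdetV
      · exact (Finset.prod_ne_zero_iff.mpr fun j _ => hd0 j) h
    · rw [h, mul_zero] at hdetV; simp at hdetV
  · intro c
    set Q : Matrix (Fin n) (Fin n) ℝ := Uᵀ with hQ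
    have hQmap : Q.map Complex.ofReal = Vᵀ := by rw [hQ, hV, Matrix.transpose_map]
    set c' : Fin n → ℂ := Vᵀ.mulVec c with hc'
    set G : (Fin n → ℝ) → ℂ := fun v =>
      Complex.exp (-(Real.pi : ℂ) * ∑ j, d j * (((v j : ℝ) : ℂ) - c' j) ^ 2) with hG
    have hpoint : ∀ u : Fin n → ℝ,
        Complex.exp (-(Real.pi : ℂ) *
          ((cv u - c) ⬝ᵥ (1 - Complex.I • S.map Complex.ofReal).mulVec (cv u - c)))
        = G (Q.mulVec u) := by
      intro u
      rw [hfact, hform, hG]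
      congr 2
      refine Finset.sum_congr rfl fun j _ => ?_
      congr 2
      rw [Matrix.mulVec_sub]
      have : Vᵀ.mulVec (cv u) = cv (Q.mulVec u) := by rw [← hQmap, map_mulVec_cv]
      rw [this]
      simp [cv, hc']
    have hqu : Q.det = U.det := by rw [hQ, Matrix.det_transpose]
    have hdetQ : Q.det * Q.det = 1 := by
      have h := congrArg Matrix.det hU2
      rw [Matrix.det_mul, Matrix.det_one] at h
      rw [hqu] at h ⊢
      exact h
    have hdetQ0 : Q.det ≠ 0 := by
      intro h; rw [h, zero_mul] at hdetQ; simp at hdetQ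
    have habs : |Q.det⁻¹| = 1 := by
      rcases mul_self_eq_one_iff.mp hdetQ with h | h <;> rw [h] <;> norm_num
    have hmap : Measure.map (Matrix.toLin' Q) (volume : Measure (Fin n → ℝ)) = volume := by
      rw [Real.map_matrix_volume_pi_eq_smul_volume_pi hdetQ0, habs]
      simp
    have hGcont : Continuous G := by
      rw [hG]
      fun_prop
    have hchg : (∫ u : Fin n → ℝ, G (Q.mulVec u)) = ∫ v : Fin n → ℝ, G v := by
      have h1 : (∫ u : Fin n → ℝ, G (Q.mulVec u))
          = ∫ u : Fin n → ℝ, G (Matrix.toLin' Q u) := by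
        simp_rw [Matrix.toLin'_apply]
      rw [h1, ← MeasureTheory.integral_map (by fun_prop) (by rw [hmap]; exact hGcont.aestronglyMeasurable), hmap]
    calc (∫ u : Fin n → ℝ, Complex.exp (-(Real.pi : ℂ) *
          ((cv u - c) ⬝ᵥ (1 - Complex.I • S.map Complex.ofReal).mulVec (cv u - c))))
        = ∫ u : Fin n → ℝ, G (Q.mulVec u) := by simp_rw [hpoint]
      _ = ∫ v : Fin n → ℝ, G v := hchg
      _ = ∏ j, (1 / d j) ^ (1 / 2 : ℂ) := by
          have h2 : ∀ v : Fin n → ℝ, G v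
              = ∏ j, Complex.exp (-(Real.pi : ℂ) * (d j * (((v j : ℝ) : ℂ) - c' j) ^ 2)) := by
            intro v
            simp only [hG]
            rw [Finset.mul_sum, Complex.exp_sum]
          simp_rw [h2]
          rw [MeasureTheory.volume_pi, MeasureTheory.integral_fintype_prod_eq_prod
            (f := fun j (s : ℝ) => Complex.exp (-(Real.pi : ℂ) * (d j * ((s : ℂ) - c' j) ^ 2)))]
          exact Finset.prod_congr rfl fun j _ => int_one_dim (d j) (c' j) (hdpos j)

end GaussHelpers

/-- The multivariate complex Gaussian integral `∫_{ℝⁿ} exp(−π s·Ds) ds`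
associated to a complex matrix `D`. -/
noncomputable def gaussianIntegral (n : ℕ) (D : Matrix (Fin n) (Fin n) ℂ) : ℂ :=
  ∫ s : Fin n → ℝ, Complex.exp (-(Real.pi : ℂ) *
    ((fun i => ((s i : ℝ) : ℂ)) ⬝ᵥ D.mulVec fun i => ((s i : ℝ) : ℂ)))

/-- The key Gaussian convolution computation of Theorem 5.9: for real symmetric
`A, B` and `D = I − i(A+B)`, the matrix `D` is invertible, `κ_D ≠ 0`, and the
convolution of the chirp `exp(iπ s·Bs)` with the chirped shifted Gaussian
`exp(iπ u·Au)·exp(−π‖u−x‖²)` is given by the stated explicit formula. -/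
theorem gaussian_chirp_convolution
    (n : ℕ) (A B : Matrix (Fin n) (Fin n) ℝ) (hA : A.IsSymm) (hB : B.IsSymm)
    (D : Matrix (Fin n) (Fin n) ℂ)
    (hD : D = 1 - Complex.I • (A + B).map Complex.ofReal) :
    IsUnit D ∧
    gaussianIntegral n D ≠ 0 ∧
    ∀ x t : Fin n → ℝ,
      (∫ u : Fin n → ℝ,
          Complex.exp ((Real.pi : ℂ) * Complex.I *
              (((t - u) ⬝ᵥ B.mulVec (t - u) : ℝ) : ℂ)) *
            Complex.exp ((Real.pi : ℂ) * Complex.I *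
              ((u ⬝ᵥ A.mulVec u : ℝ) : ℂ)) *
            Complex.exp (-(Real.pi : ℂ) * (((u - x) ⬝ᵥ (u - x) : ℝ) : ℂ))) =
        gaussianIntegral n D *
          Complex.exp (-(Real.pi : ℂ) *
            ((fun i => ((t i : ℝ) : ℂ)) ⬝ᵥ
              ((1 - Complex.I • A.map Complex.ofReal) *
                (1 - D⁻¹ * (1 - Complex.I • A.map Complex.ofReal))).mulVec
                fun i => ((t i : ℝ) : ℂ))) *
          Complex.exp (-2 * (Real.pi : ℂ) * Complex.I *
            ((fun i => ((t i : ℝ) : ℂ)) ⬝ᵥ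
              (B.map Complex.ofReal * D⁻¹).mulVec fun i => ((x i : ℝ) : ℂ))) *
          Complex.exp (-(Real.pi : ℂ) *
            ((fun i => ((x i : ℝ) : ℂ)) ⬝ᵥ
              (1 - D⁻¹).mulVec fun i => ((x i : ℝ) : ℂ))) := by
  obtain ⟨P, hP0, hUnit0, hint⟩ := core (A + B) (hA.add hB)
  rw [← hD] at hUnit0 hint
  have hgauss : gaussianIntegral n D = P := by
    have h0 := hint 0
    simp only [sub_zero] at h0
    exact h0
  refine ⟨hUnit0, by rw [hgauss]; exact hP0, ?_⟩
  intro x t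
  have hcv : ∀ y : Fin n → ℝ, (fun i => ((y i : ℝ) : ℂ)) = cv y := fun _ => rfl
  set Ac := A.map Complex.ofReal with hAc
  set Bc := B.map Complex.ofReal with hBc
  have hSmap : (A + B).map Complex.ofReal = Ac + Bc := by
    ext i j; simp [hAc, hBc]
  have hAsym : Acᵀ = Ac := by rw [hAc, ← Matrix.transpose_map, hA]
  have hBsym : Bcᵀ = Bc := by rw [hBc, ← Matrix.transpose_map, hB]
  have hDsym : Dᵀ = D := by
    rw [hD, transpose_sub, transpose_one, transpose_smul, ← Matrix.transpose_map, (hA.add hB)]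
  have hdet : IsUnit D.det := (Matrix.isUnit_iff_isUnit_det D).mp hUnit0
  have hDD : D * D⁻¹ = 1 := Matrix.mul_nonsing_inv D hdet
  have hDiD : D⁻¹ * D = 1 := Matrix.nonsing_inv_mul D hdet
  have hDinvsym : (D⁻¹)ᵀ = D⁻¹ := by rw [Matrix.transpose_nonsing_inv, hDsym]
  set w : Fin n → ℂ := cv x - Complex.I • (Bc.mulVec (cv t)) with hw
  set cc : Fin n → ℂ := D⁻¹.mulVec w with hcc
  have hDc : D.mulVec cc = w := by rw [hcc, Matrix.mulVec_mulVec, hDD, Matrix.one_mulVec]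
  set E : ℂ := (cv x ⬝ᵥ cv x) - Complex.I * (cv t ⬝ᵥ Bc.mulVec (cv t))
      - cc ⬝ᵥ D.mulVec cc with hE
  -- atoms
  set a1 := cv t ⬝ᵥ Bc.mulVec (cv t) with ha1
  set p1 := cv x ⬝ᵥ D⁻¹.mulVec (cv x) with hp1
  set p2 := (Bc.mulVec (cv t)) ⬝ᵥ D⁻¹.mulVec (cv x) with hp2
  set p3 := (Bc.mulVec (cv t)) ⬝ᵥ D⁻¹.mulVec (Bc.mulVec (cv t)) with hp3
  set p4 := cv x ⬝ᵥ cv x with hp4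
  -- pointwise identity
  have hpoint : ∀ u : Fin n → ℝ,
      Complex.exp ((Real.pi : ℂ) * Complex.I * (((t - u) ⬝ᵥ B.mulVec (t - u) : ℝ) : ℂ)) *
        Complex.exp ((Real.pi : ℂ) * Complex.I * ((u ⬝ᵥ A.mulVec u : ℝ) : ℂ)) *
        Complex.exp (-(Real.pi : ℂ) * (((u - x) ⬝ᵥ (u - x) : ℝ) : ℂ))
      = Complex.exp (-(Real.pi : ℂ) * ((cv u - cc) ⬝ᵥ D.mulVec (cv u - cc))) *
        Complex.exp (-(Real.pi : ℂ) * E) := by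
    intro u
    rw [← Complex.exp_add, ← Complex.exp_add, ← Complex.exp_add]
    congr 1
    rw [cv_dot_mulVec, cv_dot_mulVec, cv_dot, cv_sub, cv_sub, ← hAc, ← hBc]
    set b2 := cv u ⬝ᵥ Ac.mulVec (cv u) with hb2
    set b3 := cv u ⬝ᵥ Bc.mulVec (cv u) with hb3
    set b1 := cv u ⬝ᵥ cv u with hb1
    set b4 := cv u ⬝ᵥ cv x with hb4
    set b5 := cv u ⬝ᵥ Bc.mulVec (cv t) with hb5
    have hs1 : cc ⬝ᵥ D.mulVec (cv u) = b4 - Complex.I * b5 := by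
      rw [dot_symm_swap D hDsym, hDc, hw, dotProduct_sub, dotProduct_smul]
      simp [hb4, hb5]
    have hs1' : cv u ⬝ᵥ D.mulVec cc = b4 - Complex.I * b5 := by
      rw [hDc, hw, dotProduct_sub, dotProduct_smul]
      simp [hb4, hb5]
    have hs2 : cv t ⬝ᵥ Bc.mulVec (cv u) = b5 := dot_symm_swap Bc hBsym _ _
    have hs3 : cv x ⬝ᵥ cv u = b4 := dotProduct_comm _ _
    have hDu : cv u ⬝ᵥ D.mulVec (cv u) = b1 - Complex.I * b2 - Complex.I * b3 := by
      rw [hD, hSmap, Matrix.sub_mulVec, Matrix.one_mulVec, Matrix.smul_mulVec,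
        Matrix.add_mulVec, dotProduct_sub, dotProduct_smul, dotProduct_add]
      simp only [smul_eq_mul, hb1, hb2, hb3]
      ring
    have e1 : (cv t - cv u) ⬝ᵥ Bc.mulVec (cv t - cv u) = a1 - 2 * b5 + b3 := by
      simp only [Matrix.mulVec_sub, dotProduct_sub, sub_dotProduct]
      rw [hs2]
      simp only [ha1, hb3, hb5]
      ring
    have e2 : (cv u - cv x) ⬝ᵥ (cv u - cv x) = b1 - 2 * b4 + p4 := by
      simp only [dotProduct_sub, sub_dotProduct]
      rw [hs3]
      simp only [hb1, hb4, hp4]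
      ring
    have e3 : (cv u - cc) ⬝ᵥ D.mulVec (cv u - cc)
        = (b1 - Complex.I * b2 - Complex.I * b3) - 2 * (b4 - Complex.I * b5)
          + cc ⬝ᵥ D.mulVec cc := by
      simp only [Matrix.mulVec_sub, dotProduct_sub, sub_dotProduct]
      rw [hs1, hs1', hDu]
      ring
    rw [e1, e2, e3, hE]
    ring
  -- the integral
  rw [show (∫ u : Fin n → ℝ,
      Complex.exp ((Real.pi : ℂ) * Complex.I * (((t - u) ⬝ᵥ B.mulVec (t - u) : ℝ) : ℂ)) *
        Complex.exp ((Real.pi : ℂ) * Complex.I * ((u ⬝ᵥ A.mulVec u : ℝ) : ℂ)) *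
        Complex.exp (-(Real.pi : ℂ) * (((u - x) ⬝ᵥ (u - x) : ℝ) : ℂ)))
      = ∫ u : Fin n → ℝ,
        Complex.exp (-(Real.pi : ℂ) * ((cv u - cc) ⬝ᵥ D.mulVec (cv u - cc))) *
          Complex.exp (-(Real.pi : ℂ) * E) from by simp_rw [hpoint]]
  rw [MeasureTheory.integral_mul_const, hint cc, hgauss]
  -- now pure algebra on the RHS
  rw [hcv t, hcv x]
  -- matrix identity
  have hDB : D * (D⁻¹ * Bc) = Bc := by rw [← Matrix.mul_assoc, hDD, one_mul]
  have h1 : (1 : Matrix (Fin n) (Fin n) ℂ) - Complex.I • Ac = D + Complex.I • Bc := by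
    rw [hD, hSmap, smul_add]
    abel
  have h2 : (1 : Matrix (Fin n) (Fin n) ℂ) - D⁻¹ * (1 - Complex.I • Ac)
      = (-Complex.I) • (D⁻¹ * Bc) := by
    rw [h1, mul_add, hDiD, Matrix.mul_smul, neg_smul]
    abel
  have hM : (1 - Complex.I • Ac) * (1 - D⁻¹ * (1 - Complex.I • Ac))
      = (-Complex.I) • Bc + Bc * (D⁻¹ * Bc) := by
    rw [h2, h1, Matrix.add_mul, Matrix.mul_smul, hDB, Matrix.smul_mul, Matrix.mul_smul,
      smul_smul]
    congr 1
    rw [show Complex.I * -Complex.I = 1 from by simp, one_smul]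
  have f1 : cv t ⬝ᵥ ((1 - Complex.I • Ac) * (1 - D⁻¹ * (1 - Complex.I • Ac))).mulVec (cv t)
      = -Complex.I * a1 + p3 := by
    rw [hM, Matrix.add_mulVec, dotProduct_add, Matrix.smul_mulVec,
      dotProduct_smul, dot_mulVec_left Bc hBsym, ← Matrix.mulVec_mulVec]
    rw [← hp3, ← ha1]
    simp [smul_eq_mul]
  have f2 : cv t ⬝ᵥ (Bc * D⁻¹).mulVec (cv x) = p2 := by
    rw [dot_mulVec_left Bc hBsym]
  have f3 : cv x ⬝ᵥ ((1 : Matrix (Fin n) (Fin n) ℂ) - D⁻¹).mulVec (cv x) = p4 - p1 := by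
    rw [Matrix.sub_mulVec, Matrix.one_mulVec, dotProduct_sub]
  have f4 : cc ⬝ᵥ D.mulVec cc = p1 - 2 * Complex.I * p2 - p3 := by
    have hsw : cv x ⬝ᵥ D⁻¹.mulVec (Bc.mulVec (cv t)) = p2 := dot_symm_swap D⁻¹ hDinvsym _ _
    rw [show cc ⬝ᵥ D.mulVec cc = w ⬝ᵥ D⁻¹.mulVec w from by
      rw [hDc, dotProduct_comm, hcc]]
    rw [hw]
    simp only [Matrix.mulVec_sub, dotProduct_sub, sub_dotProduct,
      Matrix.mulVec_smul, dotProduct_smul, smul_dotProduct, smul_eq_mul]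
    rw [hsw]
    simp only [hp1, hp2, hp3]
    linear_combination (Bc *ᵥ cv t ⬝ᵥ D⁻¹ *ᵥ Bc *ᵥ cv t) * Complex.I_sq
  rw [mul_assoc, mul_assoc, ← Complex.exp_add, ← Complex.exp_add, f1, f2, f3]
  congr 1
  rw [hE, f4, ha1]
  ring
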